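/- arXiv:2308.05065 — 2 statements merged into one kernel-verified Lean document; each statement's English description precedes it below -/
import Mathlib

section
/- Let μ, ν be Borel probability measures on S^n ⊂ R^{n+1} and α ∈ [0,1]. For any ρ ∈ P(S^n), (1−α)d_{W₂}²(μ,ρ) + αd_{W₂}²(ν,ρ) ≥ min over couplings π of μ and ν of ∬ c_α(x,y) dπ(x,y), where c_α(x,y) = 2(1 − ‖(1−α)x + αy‖). -/
/-!
Glue a coupling of `(μ, ρ)` and one of `(ν, ρ)` along `ρ` into a law of triples `(x, y, z)`.
For unit vectors, `(1 - α)‖x - z‖² + α‖y - z‖² = 2 - 2⟪(1 - α)x + αy, z⟫`, which by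
Cauchy–Schwarz is at least `2(1 - ‖(1 - α)x + αy‖)`. Integrating over the triples, the
`(x, y)`-marginal is a coupling of `(μ, ν)` whose cost is at most the weighted sum of the two
transport costs; passing to infima gives the inequality.
-/

open MeasureTheory

/-- The squared quadratic Wasserstein distance on a metric space, as the infimum
of transport costs over all couplings. -/
noncomputable def W2sq {X : Type*} [MetricSpace X] [MeasurableSpace X]
    (μ ν : Measure X) : ℝ :=
  sInf {c : ℝ | ∃ π : Measure (X × X), IsProbabilityMeasure π ∧
    π.map Prod.fst = μ ∧ π.map Prod.snd = ν ∧ c = ∫ q, dist q.1 q.2 ^ 2 ∂π}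

open ProbabilityTheory

namespace MeasureTheory.Measure

variable {Z X Y : Type*} [MeasurableSpace Z] [MeasurableSpace X] [MeasurableSpace Y]
  [StandardBorelSpace X] [Nonempty X] [StandardBorelSpace Y] [Nonempty Y]

noncomputable def glue (σ₁ : Measure (Z × X)) (σ₂ : Measure (Z × Y))
    [IsFiniteMeasure σ₁] [IsFiniteMeasure σ₂] : Measure (Z × X × Y) :=
  σ₁.fst ⊗ₘ (σ₁.condKernel ×ₖ σ₂.condKernel)

variable (σ₁ : Measure (Z × X)) (σ₂ : Measure (Z × Y)) [IsFiniteMeasure σ₁] [IsFiniteMeasure σ₂]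

instance [IsProbabilityMeasure σ₁] : IsProbabilityMeasure (glue σ₁ σ₂) := by
  unfold glue; infer_instance

theorem map_glue_left : (glue σ₁ σ₂).map (Prod.map id Prod.fst) = σ₁ := by
  rw [glue, ← compProd_map measurable_fst, ← Kernel.fst_eq, Kernel.fst_prod, disintegrate]

theorem map_glue_right (h : σ₁.fst = σ₂.fst) : (glue σ₁ σ₂).map (Prod.map id Prod.snd) = σ₂ := by
  rw [glue, ← compProd_map measurable_snd, ← Kernel.snd_eq, Kernel.snd_prod, h, disintegrate]

theorem integral_map_snd_glue_le (h : σ₁.fst = σ₂.fst) {f : X × Y → ℝ} {g₁ : Z × X → ℝ}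
    {g₂ : Z × Y → ℝ} (hf : Integrable f ((glue σ₁ σ₂).map Prod.snd)) (hg₁ : Integrable g₁ σ₁)
    (hg₂ : Integrable g₂ σ₂) (hfg : ∀ z x y, f (x, y) ≤ g₁ (z, x) + g₂ (z, y)) :
    ∫ p, f p ∂(glue σ₁ σ₂).map Prod.snd ≤ ∫ p, g₁ p ∂σ₁ + ∫ p, g₂ p ∂σ₂ := by
  have hφ₁ : Measurable (Prod.map id Prod.fst : Z × X × Y → Z × X) := by fun_prop
  have hφ₂ : Measurable (Prod.map id Prod.snd : Z × X × Y → Z × Y) := by fun_prop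
  have h₁ := map_glue_left σ₁ σ₂
  have h₂ := map_glue_right σ₁ σ₂ h
  generalize glue σ₁ σ₂ = γ at hf h₁ h₂ ⊢
  subst h₁ h₂
  have hg₁' := hg₁.comp_measurable hφ₁
  have hg₂' := hg₂.comp_measurable hφ₂
  rw [integral_map measurable_snd.aemeasurable hf.aestronglyMeasurable,
    integral_map hφ₁.aemeasurable hg₁.aestronglyMeasurable,
    integral_map hφ₂.aemeasurable hg₂.aestronglyMeasurable]
  exact (integral_mono (hf.comp_measurable measurable_snd) (hg₁'.add hg₂')
    fun p ↦ hfg p.1 p.2.1 p.2.2).trans_eq (integral_add hg₁' hg₂')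

theorem fst_snd_glue : (glue σ₁ σ₂).snd.fst = σ₁.snd := by
  conv_rhs => rw [← map_glue_left σ₁ σ₂]
  rw [Measure.snd, Measure.fst, Measure.snd, map_map measurable_fst measurable_snd,
    map_map measurable_snd (by fun_prop)]
  rfl

theorem snd_snd_glue (h : σ₁.fst = σ₂.fst) : (glue σ₁ σ₂).snd.snd = σ₂.snd := by
  conv_rhs => rw [← map_glue_right σ₁ σ₂ h]
  rw [Measure.snd, Measure.snd, Measure.snd, map_map measurable_snd measurable_snd,
    map_map measurable_snd (by fun_prop)]
  rfl

end MeasureTheory.Measure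

theorem Real.le_mul_sInf_add_mul_sInf {A B : Set ℝ} {a b c : ℝ} (ha : 0 ≤ a) (hb : 0 ≤ b)
    (hA : A.Nonempty) (hB : B.Nonempty) (h : ∀ x ∈ A, ∀ y ∈ B, c ≤ a * x + b * y) :
    c ≤ a * sInf A + b * sInf B := by
  refine le_of_forall_pos_le_add fun ε hε ↦ ?_
  set δ := ε / (a + b + 1)
  have hδ : 0 < δ := by positivity
  have hε : (a + b) * δ ≤ ε := by
    rw [mul_div_assoc', div_le_iff₀ (by positivity)]
    nlinarith
  obtain ⟨x, hxA, hx⟩ := Real.lt_sInf_add_pos hA hδ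
  obtain ⟨y, hyB, hy⟩ := Real.lt_sInf_add_pos hB hδ
  calc c ≤ a * x + b * y := h x hxA y hyB
    _ ≤ a * (sInf A + δ) + b * (sInf B + δ) := by gcongr
    _ ≤ a * sInf A + b * sInf B + ε := by linarith

section Sphere

variable {F : Type*} [NormedAddCommGroup F] [InnerProductSpace ℝ F]

theorem two_mul_one_sub_norm_le_of_norm_eq_one {x y z : F} (hx : ‖x‖ = 1) (hy : ‖y‖ = 1)
    (hz : ‖z‖ = 1) (α : ℝ) :
    2 * (1 - ‖(1 - α) • x + α • y‖) ≤ (1 - α) * ‖x - z‖ ^ 2 + α * ‖y - z‖ ^ 2 := by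
  have hcs := real_inner_le_norm ((1 - α) • x + α • y) z
  rw [inner_add_left, real_inner_smul_left, real_inner_smul_left, hz, mul_one] at hcs
  rw [norm_sub_sq_real, norm_sub_sq_real, hx, hy, hz]
  linarith

theorem two_mul_one_sub_norm_nonneg {x y : F} (hx : ‖x‖ ≤ 1) (hy : ‖y‖ ≤ 1) {α : ℝ}
    (hα : α ∈ Set.Icc (0 : ℝ) 1) : 0 ≤ 2 * (1 - ‖(1 - α) • x + α • y‖) := by
  have := convex_closedBall (0 : F) 1 (mem_closedBall_zero_iff.2 hx)
    (mem_closedBall_zero_iff.2 hy) (sub_nonneg.2 hα.2) hα.1 (sub_add_cancel 1 α)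
  have := mem_closedBall_zero_iff.1 this
  linarith

variable [FiniteDimensional ℝ F] [MeasurableSpace F] [BorelSpace F]

local notation "S" => Metric.sphere (0 : F) 1

theorem exists_coupling_integral_le_of_snd_eq [Nontrivial F] (α : ℝ)
    {π₁ π₂ : Measure (S × S)} [IsProbabilityMeasure π₁] [IsProbabilityMeasure π₂]
    (h : π₁.snd = π₂.snd) :
    ∃ π : Measure (S × S), IsProbabilityMeasure π ∧ π.fst = π₁.fst ∧ π.snd = π₂.fst ∧
      ∫ q, 2 * (1 - ‖(1 - α) • (q.1 : F) + α • (q.2 : F)‖) ∂π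
        ≤ (1 - α) * ∫ q, dist q.1 q.2 ^ 2 ∂π₁ + α * ∫ q, dist q.1 q.2 ^ 2 ∂π₂ := by
  have : Nonempty S := (NormedSpace.sphere_nonempty.mpr zero_le_one).to_subtype
  set σ₁ := π₁.map Prod.swap
  set σ₂ := π₂.map Prod.swap
  have : IsProbabilityMeasure σ₁ := Measure.isProbabilityMeasure_map measurable_swap.aemeasurable
  have hσ : σ₁.fst = σ₂.fst := by simpa only [σ₁, σ₂, Measure.fst_map_swap] using h
  have hint {μ : Measure (S × S)} [IsFiniteMeasure μ] {f : S × S → ℝ} (hf : Continuous f) :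
      Integrable f μ :=
    hf.integrable_of_hasCompactSupport (HasCompactSupport.of_compactSpace f)
  refine ⟨(Measure.glue σ₁ σ₂).snd, inferInstance, ?_, ?_, ?_⟩
  · rw [Measure.fst_snd_glue, Measure.snd_map_swap]
  · rw [Measure.snd_snd_glue σ₁ σ₂ hσ, Measure.snd_map_swap]
  refine (Measure.integral_map_snd_glue_le σ₁ σ₂ hσ (g₁ := fun p ↦ (1 - α) * dist p.2 p.1 ^ 2)
    (g₂ := fun p ↦ α * dist p.2 p.1 ^ 2) (hint (by fun_prop)) (hint (by fun_prop))
    (hint (by fun_prop)) fun z x y ↦ ?_).trans_eq ?_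
  · simpa only [Subtype.dist_eq, dist_eq_norm] using two_mul_one_sub_norm_le_of_norm_eq_one
      (norm_eq_of_mem_sphere x) (norm_eq_of_mem_sphere y) (norm_eq_of_mem_sphere z) α
  · rw [integral_map measurable_swap.aemeasurable (hint (by fun_prop)).aestronglyMeasurable,
      integral_map measurable_swap.aemeasurable (hint (by fun_prop)).aestronglyMeasurable,
      integral_const_mul, integral_const_mul]
    rfl

end Sphere

theorem stmt_18 (n : ℕ) (α : ℝ) (hα : α ∈ Set.Icc (0:ℝ) 1)
    (μ ν ρ : Measure (Metric.sphere (0 : EuclideanSpace ℝ (Fin (n+1))) 1))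
    [IsProbabilityMeasure μ] [IsProbabilityMeasure ν] [IsProbabilityMeasure ρ] :
    (1 - α) * W2sq μ ρ + α * W2sq ν ρ
      ≥ sInf {c : ℝ |
          ∃ π : Measure ((Metric.sphere (0 : EuclideanSpace ℝ (Fin (n+1))) 1)
              × (Metric.sphere (0 : EuclideanSpace ℝ (Fin (n+1))) 1)),
            IsProbabilityMeasure π ∧ π.map Prod.fst = μ ∧ π.map Prod.snd = ν ∧
            c = ∫ q, 2 * (1 - ‖(1 - α) • (q.1 : EuclideanSpace ℝ (Fin (n+1)))
                  + α • (q.2 : EuclideanSpace ℝ (Fin (n+1)))‖) ∂π} := by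
  refine Real.le_mul_sInf_add_mul_sInf (sub_nonneg.2 hα.2) hα.1
    ⟨_, μ.prod ρ, inferInstance, Measure.fst_prod, Measure.snd_prod, rfl⟩
    ⟨_, ν.prod ρ, inferInstance, Measure.fst_prod, Measure.snd_prod, rfl⟩ ?_
  rintro _ ⟨π₁, _, rfl, hρ₁, rfl⟩ _ ⟨π₂, _, rfl, hρ₂, rfl⟩
  obtain ⟨π, hπ, hfst, hsnd, hle⟩ :=
    exists_coupling_integral_le_of_snd_eq α (hρ₁.trans hρ₂.symm)
  refine csInf_le_of_le ⟨0, ?_⟩ ⟨π, hπ, hfst, hsnd, rfl⟩ hle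
  rintro _ ⟨π, -, -, -, rfl⟩
  exact integral_nonneg fun q ↦ two_mul_one_sub_norm_nonneg
    (norm_eq_of_mem_sphere q.1).le (norm_eq_of_mem_sphere q.2).le hα
end

section
/- Let Φ be a surjective isometry of the quadratic Wasserstein space W₂(S^n, ‖·‖) (probability measures on the sphere with the chordal metric). Then Φ maps Dirac measures to Dirac measures, and the induced map ψ: S^n → S^n defined by Φ(δ_x) = δ_{ψ(x)} is an isometry of (S^n, ‖·‖). -/
/-!
Two probability measures on the unit sphere at `W₂`-distance `2` are Dirac masses at antipodal
points: `2` bounds the chordal distance, so the independent coupling must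
carry almost all of its mass onto antipodal pairs, and strict convexity of the norm makes the
antipode of a point unique. An isometry `Φ` keeps `δ_x` and `δ_{-x}` at distance `2`, so `Φ δ_x`
is a Dirac mass `δ_{ψ x}`, and `W₂(δ_x, δ_y) = ‖x - y‖` makes `ψ` an isometry.
-/

open MeasureTheory

/-- The quadratic Wasserstein distance. -/
noncomputable def W2dist {X : Type*} [MetricSpace X] [MeasurableSpace X]
    (μ ν : Measure X) : ℝ :=
  Real.sqrt (W2sq μ ν)

namespace MeasureTheory.Measure

variable {X : Type*} [MeasurableSpace X]

theorem eq_dirac_of_ae_eq (μ : Measure X) [IsProbabilityMeasure μ] {a : X}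
    (h : ∀ᵐ x ∂μ, x = a) : μ = dirac a :=
  calc μ = μ.map id := map_id.symm
    _ = μ.map fun _ ↦ a := map_congr h
    _ = dirac a := by simp [map_const]

theorem eq_dirac_of_map_fst_of_map_snd [MeasurableSingletonClass X] {π : Measure (X × X)}
    [IsProbabilityMeasure π] {a b : X} (h₁ : π.map Prod.fst = dirac a)
    (h₂ : π.map Prod.snd = dirac b) : π = dirac (a, b) := by
  have hfst : ∀ᵐ q ∂π, q.1 = a :=
    ae_of_ae_map (p := (· = a)) measurable_fst.aemeasurable (by rw [h₁, ae_dirac_eq]; rfl)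
  have hsnd : ∀ᵐ q ∂π, q.2 = b :=
    ae_of_ae_map (p := (· = b)) measurable_snd.aemeasurable (by rw [h₂, ae_dirac_eq]; rfl)
  refine π.eq_dirac_of_ae_eq ?_
  filter_upwards [hfst, hsnd] with q h₁ h₂ using Prod.ext h₁ h₂

end MeasureTheory.Measure

section Wasserstein

variable {X : Type*} [MetricSpace X] [MeasurableSpace X]

theorem W2sq_nonneg (μ ν : Measure X) : 0 ≤ W2sq μ ν :=
  Real.sInf_nonneg fun _ ⟨_, _, _, _, hc⟩ ↦ hc ▸ integral_nonneg fun _ ↦ sq_nonneg _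

theorem W2dist_sq (μ ν : Measure X) : W2dist μ ν ^ 2 = W2sq μ ν :=
  Real.sq_sqrt (W2sq_nonneg μ ν)

theorem W2sq_le_integral_of_coupling {μ ν : Measure X} (π : Measure (X × X))
    [IsProbabilityMeasure π] (h₁ : π.map Prod.fst = μ) (h₂ : π.map Prod.snd = ν) :
    W2sq μ ν ≤ ∫ q, dist q.1 q.2 ^ 2 ∂π :=
  csInf_le ⟨0, fun _ ⟨_, _, _, _, hc⟩ ↦ hc ▸ integral_nonneg fun _ ↦ sq_nonneg _⟩
    ⟨π, inferInstance, h₁, h₂, rfl⟩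

theorem W2sq_dirac_dirac [MeasurableSingletonClass X] (a b : X) :
    W2sq (Measure.dirac a) (Measure.dirac b) = dist a b ^ 2 := by
  have hcost : {c : ℝ | ∃ π : Measure (X × X), IsProbabilityMeasure π ∧
      π.map Prod.fst = Measure.dirac a ∧ π.map Prod.snd = Measure.dirac b ∧
      c = ∫ q, dist q.1 q.2 ^ 2 ∂π} = {dist a b ^ 2} := by
    ext c
    constructor
    · rintro ⟨π, _, h₁, h₂, rfl⟩
      rw [Measure.eq_dirac_of_map_fst_of_map_snd h₁ h₂, integral_dirac]
      rfl
    · rintro rfl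
      exact ⟨Measure.dirac (a, b), inferInstance, Measure.map_dirac' measurable_fst _,
        Measure.map_dirac' measurable_snd _, by rw [integral_dirac]⟩
  rw [W2sq, hcost, csInf_singleton]

theorem W2dist_dirac_dirac [MeasurableSingletonClass X] (a b : X) :
    W2dist (Measure.dirac a) (Measure.dirac b) = dist a b := by
  rw [W2dist, W2sq_dirac_dirac, Real.sqrt_sq dist_nonneg]

theorem ae_dist_eq_of_W2dist_eq [OpensMeasurableSpace X] [SecondCountableTopology X]
    {μ ν : Measure X} [IsProbabilityMeasure μ] [IsProbabilityMeasure ν] {D : ℝ}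
    (hD : ∀ x y : X, dist x y ≤ D) (hW : W2dist μ ν = D) :
    ∀ᵐ q ∂μ.prod ν, dist q.1 q.2 = D := by
  have hD₀ : 0 ≤ D := hW ▸ Real.sqrt_nonneg _
  have hbound : ∀ q : X × X, dist q.1 q.2 ^ 2 ≤ D ^ 2 := fun q ↦
    pow_le_pow_left₀ dist_nonneg (hD q.1 q.2) 2
  have hint : Integrable (fun q : X × X ↦ dist q.1 q.2 ^ 2) (μ.prod ν) :=
    Integrable.of_bound (measurable_dist.pow_const 2).aestronglyMeasurable (D ^ 2)
      (ae_of_all _ fun q ↦ by simpa using hbound q)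
  have hcost : ∫ q, dist q.1 q.2 ^ 2 ∂μ.prod ν = ∫ _q, D ^ 2 ∂μ.prod ν := by
    refine le_antisymm (integral_mono hint (integrable_const _) hbound) ?_
    calc ∫ _q, D ^ 2 ∂μ.prod ν = W2sq μ ν := by simp [← W2dist_sq, hW]
      _ ≤ _ := W2sq_le_integral_of_coupling _ (by simp) (by simp)
  filter_upwards [(integral_eq_iff_of_ae_le hint (integrable_const _)
    (ae_of_all _ hbound)).1 hcost] with q hq
  exact (pow_left_inj₀ dist_nonneg hD₀ two_ne_zero).1 hq

end Wasserstein

section Sphere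

variable {E : Type*} [NormedAddCommGroup E]

theorem unitSphere_dist_le_two (x y : Metric.sphere (0 : E) 1) : dist x y ≤ 2 := by
  calc dist x y = ‖(x : E) - y‖ := dist_eq_norm _ _
    _ ≤ ‖(x : E)‖ + ‖(y : E)‖ := norm_sub_le _ _
    _ = 2 := by norm_num

variable [NormedSpace ℝ E] [StrictConvexSpace ℝ E]

theorem unitSphere_dist_eq_two_iff (x y : Metric.sphere (0 : E) 1) : dist x y = 2 ↔ y = -x := by
  constructor
  · intro h
    have hsum : ‖(x : E) + -(y : E)‖ = ‖(x : E)‖ + ‖-(y : E)‖ := by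
      rw [← sub_eq_add_neg, ← dist_eq_norm, ← Subtype.dist_eq, h]
      norm_num
    refine Subtype.ext ?_
    rw [coe_neg_sphere, eq_of_norm_eq_of_norm_add_eq (by simp) hsum, neg_neg]
  · rintro rfl
    rw [Subtype.dist_eq, coe_neg_sphere, dist_eq_norm, sub_neg_eq_add, ← two_smul ℝ, norm_smul]
    norm_num

variable [MeasurableSpace E] [BorelSpace E] [SecondCountableTopology E]

theorem exists_eq_dirac_of_W2dist_eq_two {μ ν : Measure (Metric.sphere (0 : E) 1)}
    [IsProbabilityMeasure μ] [IsProbabilityMeasure ν] (h : W2dist μ ν = 2) :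
    ∃ y, ν = Measure.dirac y := by
  have hanti : ∀ᵐ q ∂μ.prod ν, q.2 = -q.1 := by
    filter_upwards [ae_dist_eq_of_W2dist_eq unitSphere_dist_le_two h] with q hq
    exact (unitSphere_dist_eq_two_iff q.1 q.2).1 hq
  have : (ae μ).NeBot := ae_neBot.2 (IsProbabilityMeasure.ne_zero μ)
  obtain ⟨x, hx⟩ := (Measure.ae_ae_of_ae_prod hanti).exists
  exact ⟨-x, ν.eq_dirac_of_ae_eq hx⟩

end Sphere

theorem stmt_19_general (n : ℕ)
    (Φ : Measure (Metric.sphere (0 : EuclideanSpace ℝ (Fin (n+1))) 1)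
      → Measure (Metric.sphere (0 : EuclideanSpace ℝ (Fin (n+1))) 1))
    (hprob : ∀ μ, IsProbabilityMeasure μ → IsProbabilityMeasure (Φ μ))
    (hiso : ∀ μ ν : Measure (Metric.sphere (0 : EuclideanSpace ℝ (Fin (n+1))) 1),
      IsProbabilityMeasure μ → IsProbabilityMeasure ν →
        W2dist (Φ μ) (Φ ν) = W2dist μ ν) :
    ∃ ψ : Metric.sphere (0 : EuclideanSpace ℝ (Fin (n+1))) 1
        → Metric.sphere (0 : EuclideanSpace ℝ (Fin (n+1))) 1,
      Isometry ψ ∧ ∀ x, Φ (Measure.dirac x) = Measure.dirac (ψ x) := by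
  have hdirac : ∀ x, ∃ y, Φ (Measure.dirac x) = Measure.dirac y := by
    intro x
    have := hprob _ (inferInstance : IsProbabilityMeasure (Measure.dirac (-x)))
    have := hprob _ (inferInstance : IsProbabilityMeasure (Measure.dirac x))
    refine exists_eq_dirac_of_W2dist_eq_two (μ := Φ (Measure.dirac (-x))) ?_
    rw [hiso _ _ inferInstance inferInstance, W2dist_dirac_dirac,
      unitSphere_dist_eq_two_iff, neg_neg]
  choose ψ hψ using hdirac
  refine ⟨ψ, Isometry.of_dist_eq fun x y ↦ ?_, hψ⟩
  have h := hiso (Measure.dirac x) (Measure.dirac y) inferInstance inferInstance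
  rwa [hψ x, hψ y, W2dist_dirac_dirac, W2dist_dirac_dirac] at h

theorem stmt_19 (n : ℕ)
    (Φ : Measure (Metric.sphere (0 : EuclideanSpace ℝ (Fin (n+1))) 1)
      → Measure (Metric.sphere (0 : EuclideanSpace ℝ (Fin (n+1))) 1))
    (hprob : ∀ μ, IsProbabilityMeasure μ → IsProbabilityMeasure (Φ μ))
    (hsurj : ∀ ν : Measure (Metric.sphere (0 : EuclideanSpace ℝ (Fin (n+1))) 1),
      IsProbabilityMeasure ν → ∃ μ, IsProbabilityMeasure μ ∧ Φ μ = ν)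
    (hiso : ∀ μ ν : Measure (Metric.sphere (0 : EuclideanSpace ℝ (Fin (n+1))) 1),
      IsProbabilityMeasure μ → IsProbabilityMeasure ν →
        W2dist (Φ μ) (Φ ν) = W2dist μ ν) :
    ∃ ψ : Metric.sphere (0 : EuclideanSpace ℝ (Fin (n+1))) 1
        → Metric.sphere (0 : EuclideanSpace ℝ (Fin (n+1))) 1,
      Isometry ψ ∧ ∀ x, Φ (Measure.dirac x) = Measure.dirac (ψ x) :=
  stmt_19_general n Φ hprob hiso
end
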